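/- arXiv:2212.06084 — 4 statements merged into one kernel-verified Lean document; each statement's English description precedes it below -/
import Mathlib

section
/- For every n-qubit Pauli string P containing n_X X's, n_Y Y's, n_Z Z's (and identities elsewhere), every single-qubit unitary V ∈ SU(2), and every computational basis state |b⟩, the value ⟨b| V^{⊗n} P V^{†⊗n} |b⟩ depends only on (n_X, n_Y, n_Z), on the set of identity sites, and on b — not on the particular arrangement of the X, Y, Z factors among the non-identity sites. Consequently, each operator B_{S,k}^⊥ = (2^n k(k+1))^{-1/2}(Σ_{j=1}^k P_j − k P_{k+1}) built from a fixed-identity permutation-invariant set S satisfies ⟨b| V^{⊗n} B_{S,k}^⊥ V^{†⊗n} |b⟩ = 0 for all V ∈ SU(2) and all b. -/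
open Matrix Finset

noncomputable section

abbrev Bits (n : ℕ) := Fin n → Fin 2
abbrev Op (n : ℕ) := Matrix (Bits n) (Bits n) ℂ

def pauli1 : Fin 4 → Matrix (Fin 2) (Fin 2) ℂ :=
  ![1, !![0, 1; 1, 0], !![0, -Complex.I; Complex.I, 0], !![1, 0; 0, -1]]

def pStr {n : ℕ} (s : Fin n → Fin 4) : Op n :=
  Matrix.of fun b c => ∏ i, pauli1 (s i) (b i) (c i)

/-- the global tensor power `V^{⊗n}` of a single-qubit operator. -/
def tpow {n : ℕ} (V : Matrix (Fin 2) (Fin 2) ℂ) : Op n :=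
  Matrix.of fun b c => ∏ i, V (b i) (c i)

def sameClass {n : ℕ} (s t : Fin n → Fin 4) : Prop :=
  (∀ i, s i = 0 ↔ t i = 0) ∧
    ∀ a : Fin 4, (univ.filter fun i => s i = a).card =
      (univ.filter fun i => t i = a).card

open scoped Classical in
def cls {n : ℕ} (s : Fin n → Fin 4) : Finset (Fin n → Fin 4) :=
  univ.filter (sameClass s)

/-
Conjugating every site by the same unitary `V` turns a Pauli string into the tensor product of
the single-qubit operators `V σ Vᴴ`, so its diagonal entry at `b` is the product over the sites
of `(V σ_{s i} Vᴴ)_{b i, b i}`. On an identity site this entry is `1`; since the other Paulis are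
traceless, on a non-identity site it is `±(V σ_{s i} Vᴴ)₀₀`, with sign `-1` exactly when
`b i = 1`. The product therefore splits into a sign fixed by `b` and the identity sites, times a
product of entries `(V σ_a Vᴴ)₀₀` in which each letter `a` occurs as often as it does in the
string. For `B_{S,k}^⊥` all `k + 1` strings give the same value `d`, and `k d - k d = 0`.
-/

lemma Finset.prod_comp_eq_of_card_fiber_eq {ι κ M : Type*} [Fintype ι] [Fintype κ]
    [DecidableEq κ] [CommMonoid M] (f : κ → M) {u v : ι → κ}
    (h : ∀ a, #{i | u i = a} = #{i | v i = a}) : ∏ i, f (u i) = ∏ i, f (v i) := by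
  simp only [← Finset.prod_fiberwise' univ u f, ← Finset.prod_fiberwise' univ v f,
    Finset.prod_const, h]

lemma diag_mul_smul_sum_sub_mul_eq_zero {m R : Type*} [Fintype m] [DecidableEq m] [CommRing R]
    (W W' : Matrix m m R) (P : ℕ → Matrix m m R) (c : R) (k : ℕ) (b : m)
    (hP : ∀ j < k, (W * P j * W') b b = (W * P k * W') b b) :
    (W * (c • (∑ j ∈ Finset.range k, P j - (k : R) • P k)) * W') b b = 0 := by
  simp only [Matrix.mul_smul, Matrix.smul_mul, Matrix.mul_sub, Matrix.sub_mul, Matrix.mul_sum,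
    Matrix.sum_mul, Matrix.smul_apply, Matrix.sub_apply, Matrix.sum_apply]
  rw [Finset.sum_congr rfl fun j hj => hP j (Finset.mem_range.mp hj), Finset.sum_const,
    Finset.card_range, nsmul_eq_mul]
  simp only [smul_eq_mul, sub_self, mul_zero]

lemma trace_pauli1_of_ne_zero {a : Fin 4} (ha : a ≠ 0) : (pauli1 a).trace = 0 := by
  fin_cases a
  · exact absurd rfl ha
  all_goals simp [pauli1, Matrix.trace_fin_two]

lemma conj_pauli1_diag {V : Matrix (Fin 2) (Fin 2) ℂ} (hV : V ∈ Matrix.unitaryGroup (Fin 2) ℂ)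
    (a : Fin 4) (x : Fin 2) :
    (V * pauli1 a * Vᴴ) x x = (if a ≠ 0 ∧ x = 1 then -1 else 1) * (V * pauli1 a * Vᴴ) 0 0 := by
  have hVV : V * Vᴴ = 1 := Matrix.mem_unitaryGroup_iff.mp hV
  have hVV' : Vᴴ * V = 1 := Matrix.mem_unitaryGroup_iff'.mp hV
  by_cases ha : a = 0
  · subst ha
    simp [show pauli1 0 = 1 from rfl, hVV]
  · obtain rfl | rfl : x = 0 ∨ x = 1 := by omega
    · simp
    · have htr : (V * pauli1 a * Vᴴ).trace = 0 := by
        rw [Matrix.trace_mul_cycle, hVV', Matrix.one_mul, trace_pauli1_of_ne_zero ha]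
      rw [Matrix.trace_fin_two] at htr
      simp only [ne_eq, ha, not_false_eq_true, and_self, if_true]
      linear_combination htr

section SiteProd

variable {n : ℕ}

def siteProd (M : Fin n → Matrix (Fin 2) (Fin 2) ℂ) : Op n :=
  Matrix.of fun b c => ∏ i, M i (b i) (c i)

lemma siteProd_apply (M : Fin n → Matrix (Fin 2) (Fin 2) ℂ) (b c : Bits n) :
    siteProd M b c = ∏ i, M i (b i) (c i) := rfl

lemma siteProd_mul (M N : Fin n → Matrix (Fin 2) (Fin 2) ℂ) :
    siteProd M * siteProd N = siteProd fun i => M i * N i := by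
  ext b c
  simp only [siteProd, Matrix.mul_apply, Matrix.of_apply]
  rw [Fintype.prod_sum]
  simp [Finset.prod_mul_distrib]

lemma siteProd_conjTranspose (M : Fin n → Matrix (Fin 2) (Fin 2) ℂ) :
    (siteProd M)ᴴ = siteProd fun i => (M i)ᴴ := by
  ext b c
  simp [siteProd, Matrix.conjTranspose_apply]

lemma tpow_mul_pStr_mul_conjTranspose (V : Matrix (Fin 2) (Fin 2) ℂ) (s : Fin n → Fin 4) :
    tpow V * pStr s * (tpow V)ᴴ = siteProd fun i => V * pauli1 (s i) * Vᴴ := by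
  rw [show (tpow V : Op n) = siteProd fun _ => V from rfl,
    show pStr s = siteProd fun i => pauli1 (s i) from rfl,
    siteProd_mul, siteProd_conjTranspose, siteProd_mul]

end SiteProd

section Diagonal

variable {n : ℕ} {V : Matrix (Fin 2) (Fin 2) ℂ}

lemma diag_tpow_mul_pStr_mul_conjTranspose (hV : V ∈ Matrix.unitaryGroup (Fin 2) ℂ)
    (s : Fin n → Fin 4) (b : Bits n) :
    (tpow (n := n) V * pStr s * (tpow (n := n) V)ᴴ) b b =
      (∏ i, if s i ≠ 0 ∧ b i = 1 then -1 else 1) * ∏ i, (V * pauli1 (s i) * Vᴴ) 0 0 := by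
  rw [tpow_mul_pStr_mul_conjTranspose, siteProd_apply, ← Finset.prod_mul_distrib]
  exact Finset.prod_congr rfl fun i _ => conj_pauli1_diag hV (s i) (b i)

lemma diag_tpow_mul_pStr_mul_conjTranspose_eq_of_sameClass
    (hV : V ∈ Matrix.unitaryGroup (Fin 2) ℂ) {s t : Fin n → Fin 4} (hst : sameClass s t)
    (b : Bits n) :
    (tpow (n := n) V * pStr s * (tpow (n := n) V)ᴴ) b b =
      (tpow (n := n) V * pStr t * (tpow (n := n) V)ᴴ) b b := by
  rw [diag_tpow_mul_pStr_mul_conjTranspose hV, diag_tpow_mul_pStr_mul_conjTranspose hV,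
    Finset.prod_comp_eq_of_card_fiber_eq (fun a => (V * pauli1 a * Vᴴ) 0 0) hst.2]
  congr 1
  exact Finset.prod_congr rfl fun i _ => by simp only [ne_eq, hst.1 i]

end Diagonal

lemma sameClass_of_mem_cls {n : ℕ} {s u v : Fin n → Fin 4} (hu : u ∈ cls s) (hv : v ∈ cls s) :
    sameClass u v := by
  simp only [cls, Finset.mem_filter, Finset.mem_univ, true_and] at hu hv
  exact ⟨fun i => (hu.1 i).symm.trans (hv.1 i), fun a => (hu.2 a).symm.trans (hv.2 a)⟩

/-- diagonal elements `⟨b|V^{⊗n} P V^{†⊗n}|b⟩` of globally rotated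
Pauli strings depend only on the fixed-identity permutation-invariant class of
the string; consequently each `B_{S,k}^⊥` has vanishing diagonal elements in every
globally rotated computational basis. -/
theorem diag_depends_only_on_class (n : ℕ) :
    (∀ V ∈ Matrix.specialUnitaryGroup (Fin 2) ℂ,
      ∀ s t : Fin n → Fin 4, sameClass s t → ∀ b : Bits n,
        (tpow (n := n) V * pStr s * (tpow (n := n) V)ᴴ) b b =
          (tpow (n := n) V * pStr t * (tpow (n := n) V)ᴴ) b b) ∧
    (∀ V ∈ Matrix.specialUnitaryGroup (Fin 2) ℂ,
      ∀ s : Fin n → Fin 4, ∀ ℓ : ℕ → (Fin n → Fin 4),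
        Set.BijOn ℓ (Set.Iio ((cls s).card : ℕ)) ↑(cls s) →
        ∀ k, 1 ≤ k → k < (cls s).card → ∀ b : Bits n,
          (tpow (n := n) V *
              (((Real.sqrt (2 ^ n * (k : ℝ) * ((k : ℝ) + 1)) : ℂ))⁻¹ •
                ((∑ j ∈ Finset.range k, pStr (ℓ j)) - (k : ℂ) • pStr (ℓ k))) *
              (tpow (n := n) V)ᴴ) b b = 0) := by
  refine ⟨fun V hV s t hst b => diag_tpow_mul_pStr_mul_conjTranspose_eq_of_sameClass
    (Matrix.mem_specialUnitaryGroup_iff.mp hV).1 hst b, ?_⟩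
  intro V hV s ℓ hℓ k _ hk b
  refine diag_mul_smul_sum_sub_mul_eq_zero _ _ _ _ k b fun j hj => ?_
  exact diag_tpow_mul_pStr_mul_conjTranspose_eq_of_sameClass
    (Matrix.mem_specialUnitaryGroup_iff.mp hV).1
    (sameClass_of_mem_cls (hℓ.mapsTo (hj.trans hk)) (hℓ.mapsTo hk)) b
end
end

section
/- Let V(θ,φ,ψ) = e^{iσ_3 φ/2} e^{iσ_2 θ/2} e^{iσ_3 ψ/2} be the Euler parameterization of SU(2) with Haar measure proportional to sinθ dθ dφ dψ on θ∈[0,π], φ∈[0,2π], ψ∈[0,4π]. Then (1/(4π)^2) ∫ sinθ (−sinθ cosφ)^{n_X} (sinθ sinφ)^{n_Y} (cosθ)^{n_Z} dθ dφ dψ = (1/4)(1+(−1)^{n_X})(1+(−1)^{n_Y})(1+(−1)^{n_Z}) · [n_X! n_Y! n_Z! / ((n_X/2)! (n_Y/2)! (n_Z/2)!)] · (k+1)!/(2k+2)!, where 2k = n_X + n_Y + n_Z; in particular the integral vanishes unless n_X, n_Y, n_Z are all even. -/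
open Real MeasureTheory intervalIntegral

private lemma fne (n : ℕ) : (Nat.factorial n : ℝ) ≠ 0 :=
  Nat.cast_ne_zero.mpr n.factorial_pos.ne'

private lemma ibp_zero {a b : ℝ} (F f : ℝ → ℝ)
    (hd : ∀ x, HasDerivAt F (f x) x) (hc : Continuous f)
    (hFa : F a = F b) : ∫ x in a..b, f x = 0 := by
  rw [integral_eq_sub_of_hasDerivAt (fun x _ => hd x) (hc.intervalIntegrable a b), hFa, sub_self]

private lemma cos_rec (a : ℕ) :
    (2*a+2 : ℝ) * ∫ x in (0:ℝ)..(2*π), cos x ^ (2*a+2)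
      = (2*a+1 : ℝ) * ∫ x in (0:ℝ)..(2*π), cos x ^ (2*a) := by
  have h0 : ∫ x in (0:ℝ)..(2*π),
      ((2*a+2 : ℝ) * cos x ^ (2*a+2) - (2*a+1 : ℝ) * cos x ^ (2*a)) = 0 := by
    apply ibp_zero (fun x => cos x ^ (2*a+1) * sin x)
    · intro x
      have h1 : HasDerivAt (fun x => cos x ^ (2*a+1) * sin x)
          ((((2*a+1 : ℕ)) * cos x ^ (2*a+1-1) * (-sin x)) * sin x + cos x ^ (2*a+1) * cos x) x :=
        ((Real.hasDerivAt_cos x).pow _).mul (Real.hasDerivAt_sin x)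
      simp only [Nat.add_sub_cancel] at h1
      convert h1 using 1
      have hs := sin_sq_add_cos_sq x
      push_cast
      linear_combination ((2*(a:ℝ)+1) * cos x ^ (2*a)) * hs
    · fun_prop
    · simp
  rw [intervalIntegral.integral_sub
      ((by fun_prop : Continuous fun x:ℝ => (2*a+2:ℝ)*cos x ^ (2*a+2)).intervalIntegrable _ _)
      ((by fun_prop : Continuous fun x:ℝ => (2*a+1:ℝ)*cos x ^ (2*a)).intervalIntegrable _ _),
    intervalIntegral.integral_const_mul, intervalIntegral.integral_const_mul] at h0
  linarith

private lemma cos_pow_integral (a : ℕ) :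
    ∫ x in (0:ℝ)..(2*π), cos x ^ (2*a)
      = 2*π*(Nat.factorial (2*a)) / (4^a * (Nat.factorial a)^2) := by
  induction a with
  | zero => simp [Nat.factorial]
  | succ n ih =>
    have hr := cos_rec n
    rw [ih] at hr
    have hf1 : (Nat.factorial (2*(n+1)) : ℝ) = (2*n+2)*((2*n+1)*(Nat.factorial (2*n))) := by
      rw [show 2*(n+1) = (2*n+1)+1 by ring, Nat.factorial_succ, Nat.factorial_succ]
      push_cast; ring
    have hf2 : (Nat.factorial (n+1) : ℝ) = (n+1)*(Nat.factorial n) := by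
      rw [Nat.factorial_succ]; push_cast; ring
    rw [show 2*(n+1) = 2*n+2 from by ring] at hf1 ⊢
    rw [hf1, hf2]
    have h2 : (2*(n:ℝ)+2) ≠ 0 := by positivity
    refine mul_left_cancel₀ h2 ?_
    rw [hr]
    field_simp
    ring

private lemma J_rec (a b : ℕ) :
    (2*a+2*b+2 : ℝ) * ∫ x in (0:ℝ)..(2*π), cos x ^ (2*a) * sin x ^ (2*b+2)
      = (2*b+1 : ℝ) * ∫ x in (0:ℝ)..(2*π), cos x ^ (2*a) * sin x ^ (2*b) := by
  have h0 : ∫ x in (0:ℝ)..(2*π),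
      ((2*a+2*b+2 : ℝ) * (cos x ^ (2*a) * sin x ^ (2*b+2))
        - (2*b+1 : ℝ) * (cos x ^ (2*a) * sin x ^ (2*b))) = 0 := by
    apply ibp_zero (fun x => -(cos x ^ (2*a+1) * sin x ^ (2*b+1)))
    · intro x
      have h1 : HasDerivAt (fun x => cos x ^ (2*a+1) * sin x ^ (2*b+1))
          (((2*a+1 : ℕ) * cos x ^ (2*a+1-1) * (-sin x)) * sin x ^ (2*b+1)
            + cos x ^ (2*a+1) * ((2*b+1 : ℕ) * sin x ^ (2*b+1-1) * cos x)) x :=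
        ((Real.hasDerivAt_cos x).pow _).mul ((Real.hasDerivAt_sin x).pow _)
      have h2 := h1.neg
      simp only [Nat.add_sub_cancel] at h2
      refine h2.congr_deriv (Eq.symm ?_)
      have hs := sin_sq_add_cos_sq x
      push_cast
      linear_combination ((2*(b:ℝ)+1) * cos x ^ (2*a) * sin x ^ (2*b)) * hs
    · fun_prop
    · simp
  rw [intervalIntegral.integral_sub
      ((by fun_prop : Continuous fun x:ℝ => (2*a+2*b+2:ℝ)*(cos x ^ (2*a) * sin x ^ (2*b+2))).intervalIntegrable _ _)
      ((by fun_prop : Continuous fun x:ℝ => (2*b+1:ℝ)*(cos x ^ (2*a) * sin x ^ (2*b))).intervalIntegrable _ _),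
    intervalIntegral.integral_const_mul, intervalIntegral.integral_const_mul] at h0
  linarith

private lemma sin_rec (m : ℕ) :
    (2*m+3 : ℝ) * ∫ x in (0:ℝ)..π, sin x ^ (2*m+3)
      = (2*m+2 : ℝ) * ∫ x in (0:ℝ)..π, sin x ^ (2*m+1) := by
  have h0 : ∫ x in (0:ℝ)..π,
      ((2*m+3 : ℝ) * sin x ^ (2*m+3) - (2*m+2 : ℝ) * sin x ^ (2*m+1)) = 0 := by
    apply ibp_zero (fun x => -cos x * sin x ^ (2*m+2))
    · intro x
      have h1 : HasDerivAt (fun x => -cos x * sin x ^ (2*m+2))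
          (-(-sin x) * sin x ^ (2*m+2)
            + (-cos x) * ((2*m+2 : ℕ) * sin x ^ (2*m+2-1) * cos x)) x :=
        ((Real.hasDerivAt_cos x).neg).mul ((Real.hasDerivAt_sin x).pow _)
      simp only [show 2*m+2-1 = 2*m+1 by omega] at h1
      convert h1 using 1
      have hs := sin_sq_add_cos_sq x
      push_cast
      linear_combination ((2*(m:ℝ)+2) * sin x ^ (2*m+1)) * hs
    · fun_prop
    · simp
  rw [intervalIntegral.integral_sub
      ((by fun_prop : Continuous fun x:ℝ => (2*m+3:ℝ)*sin x ^ (2*m+3)).intervalIntegrable _ _)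
      ((by fun_prop : Continuous fun x:ℝ => (2*m+2:ℝ)*sin x ^ (2*m+1)).intervalIntegrable _ _),
    intervalIntegral.integral_const_mul, intervalIntegral.integral_const_mul] at h0
  linarith

private lemma Scos_rec (m n : ℕ) :
    (2*m+2*n+3 : ℝ) * ∫ x in (0:ℝ)..π, sin x ^ (2*m+1) * cos x ^ (2*n+2)
      = (2*n+1 : ℝ) * ∫ x in (0:ℝ)..π, sin x ^ (2*m+1) * cos x ^ (2*n) := by
  have h0 : ∫ x in (0:ℝ)..π,
      ((2*m+2*n+3 : ℝ) * (sin x ^ (2*m+1) * cos x ^ (2*n+2))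
        - (2*n+1 : ℝ) * (sin x ^ (2*m+1) * cos x ^ (2*n))) = 0 := by
    apply ibp_zero (fun x => sin x ^ (2*m+2) * cos x ^ (2*n+1))
    · intro x
      have h1 : HasDerivAt (fun x => sin x ^ (2*m+2) * cos x ^ (2*n+1))
          (((2*m+2 : ℕ) * sin x ^ (2*m+2-1) * cos x) * cos x ^ (2*n+1)
            + sin x ^ (2*m+2) * ((2*n+1 : ℕ) * cos x ^ (2*n+1-1) * (-sin x))) x :=
        ((Real.hasDerivAt_sin x).pow _).mul ((Real.hasDerivAt_cos x).pow _)
      simp only [Nat.add_sub_cancel] at h1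
      convert h1 using 1
      have hs := sin_sq_add_cos_sq x
      push_cast
      linear_combination ((2*(n:ℝ)+1) * sin x ^ (2*m+1) * cos x ^ (2*n)) * hs
    · fun_prop
    · simp
  rw [intervalIntegral.integral_sub
      ((by fun_prop : Continuous fun x:ℝ => (2*m+2*n+3:ℝ)*(sin x ^ (2*m+1) * cos x ^ (2*n+2))).intervalIntegrable _ _)
      ((by fun_prop : Continuous fun x:ℝ => (2*n+1:ℝ)*(sin x ^ (2*m+1) * cos x ^ (2*n))).intervalIntegrable _ _),
    intervalIntegral.integral_const_mul, intervalIntegral.integral_const_mul] at h0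
  linarith

private lemma sin_pow_integral (m : ℕ) :
    ∫ x in (0:ℝ)..π, sin x ^ (2*m+1)
      = 2*4^m*(Nat.factorial m)^2 / (Nat.factorial (2*m+1)) := by
  induction m with
  | zero => norm_num [Real.cos_pi, Nat.factorial]
  | succ n ih =>
    have hr := sin_rec n
    rw [ih] at hr
    have hf1 : (Nat.factorial (2*(n+1)+1) : ℝ) = (2*n+3)*((2*n+2)*(Nat.factorial (2*n+1))) := by
      rw [show 2*(n+1)+1 = (2*n+2)+1 by ring, Nat.factorial_succ,
        show 2*n+2 = (2*n+1)+1 by ring, Nat.factorial_succ]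
      push_cast; ring
    have hf2 : (Nat.factorial (n+1) : ℝ) = (n+1)*(Nat.factorial n) := by
      rw [Nat.factorial_succ]; push_cast; ring
    rw [show 2*(n+1)+1 = 2*n+3 from by ring] at hf1 ⊢
    rw [hf1, hf2]
    have h2 : (2*(n:ℝ)+3) ≠ 0 := by positivity
    refine mul_left_cancel₀ h2 ?_
    rw [hr]
    field_simp
    ring

private lemma J_closed (a b : ℕ) :
    ∫ x in (0:ℝ)..(2*π), cos x ^ (2*a) * sin x ^ (2*b)
      = 2*π*(Nat.factorial (2*a))*(Nat.factorial (2*b))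
        / (4^(a+b) * (Nat.factorial a) * (Nat.factorial b) * (Nat.factorial (a+b))) := by
  induction b with
  | zero =>
    simp only [Nat.mul_zero, pow_zero, mul_one, Nat.add_zero, Nat.factorial_zero, Nat.cast_one]
    rw [cos_pow_integral a]
    field_simp
  | succ n ih =>
    have hr := J_rec a n
    rw [ih] at hr
    have hf1 : (Nat.factorial (2*(n+1)) : ℝ) = (2*n+2)*((2*n+1)*(Nat.factorial (2*n))) := by
      rw [show 2*(n+1) = (2*n+1)+1 by ring, Nat.factorial_succ, Nat.factorial_succ]
      push_cast; ring
    have hf2 : (Nat.factorial (n+1) : ℝ) = (n+1)*(Nat.factorial n) := by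
      rw [Nat.factorial_succ]; push_cast; ring
    have hf3 : (Nat.factorial (a+(n+1)) : ℝ) = (a+n+1)*(Nat.factorial (a+n)) := by
      rw [show a+(n+1) = (a+n)+1 by ring, Nat.factorial_succ]; push_cast; ring
    rw [show 2*(n+1) = 2*n+2 from by ring] at hf1 ⊢
    rw [hf1, hf2, hf3, show a+(n+1) = a+n+1 from by ring]
    have h2 : (2*(a:ℝ)+2*n+2) ≠ 0 := by positivity
    refine mul_left_cancel₀ h2 ?_
    rw [hr]
    field_simp
    ring

private lemma Scos_closed (m n : ℕ) :
    ∫ x in (0:ℝ)..π, sin x ^ (2*m+1) * cos x ^ (2*n)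
      = 4^(m+1)*(Nat.factorial m)*(Nat.factorial (2*n))*(Nat.factorial (m+n+1))
        / ((Nat.factorial n) * (Nat.factorial (2*m+2*n+2))) := by
  induction n with
  | zero =>
    simp only [Nat.mul_zero, pow_zero, mul_one, Nat.add_zero, Nat.factorial_zero, Nat.cast_one]
    rw [sin_pow_integral m]
    have hf1 : (Nat.factorial (2*m+2) : ℝ) = (2*m+2)*(Nat.factorial (2*m+1)) := by
      rw [show 2*m+2 = (2*m+1)+1 by ring, Nat.factorial_succ]; push_cast; ring
    have hf2 : (Nat.factorial (m+1) : ℝ) = (m+1)*(Nat.factorial m) := by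
      rw [Nat.factorial_succ]; push_cast; ring
    rw [hf1, hf2]
    field_simp
    ring
  | succ c ih =>
    have hr := Scos_rec m c
    rw [ih] at hr
    have hf1 : (Nat.factorial (2*(c+1)) : ℝ) = (2*c+2)*((2*c+1)*(Nat.factorial (2*c))) := by
      rw [show 2*(c+1) = (2*c+1)+1 by ring, Nat.factorial_succ, Nat.factorial_succ]
      push_cast; ring
    have hf2 : (Nat.factorial (c+1) : ℝ) = (c+1)*(Nat.factorial c) := by
      rw [Nat.factorial_succ]; push_cast; ring
    have hf3 : (Nat.factorial (m+(c+1)+1) : ℝ) = (m+c+2)*(Nat.factorial (m+c+1)) := by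
      rw [show m+(c+1)+1 = (m+c+1)+1 by ring, Nat.factorial_succ]; push_cast; ring
    have hf4 : (Nat.factorial (2*m+(2*c+2)+2) : ℝ)
        = (2*m+2*c+4)*((2*m+2*c+3)*(Nat.factorial (2*m+2*c+2))) := by
      rw [show 2*m+(2*c+2)+2 = (2*m+2*c+3)+1 by ring, Nat.factorial_succ,
        show 2*m+2*c+3 = (2*m+2*c+2)+1 by ring, Nat.factorial_succ]
      push_cast; ring
    rw [show 2*(c+1) = 2*c+2 from by ring] at hf1 ⊢
    rw [hf1, hf2, hf3, hf4]
    have h2 : (2*(m:ℝ)+2*c+3) ≠ 0 := by positivity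
    refine mul_left_cancel₀ h2 ?_
    rw [hr]
    field_simp
    ring

private lemma phi_zero_both (p q : ℕ) :
    ∫ x in (0:ℝ)..(2*π), cos x ^ (2*p+1) * sin x ^ (2*q+1) = 0 := by
  have h := integral_sin_pow_mul_cos_pow_odd (a := (0:ℝ)) (b := 2*π) (2*q+1) p
  rw [Real.sin_zero, Real.sin_two_pi, intervalIntegral.integral_same] at h
  rw [intervalIntegral.integral_congr
    (g := fun x => sin x ^ (2*q+1) * cos x ^ (2*p+1)) (fun x _ => by ring), h]

private lemma phi_zero_odd (p q : ℕ) (hpq : Odd (p + q)) :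
    ∫ x in (0:ℝ)..(2*π), cos x ^ p * sin x ^ q = 0 := by
  have hi : ∀ u v : ℝ, IntervalIntegrable (fun x => cos x ^ p * sin x ^ q) volume u v :=
    fun u v => (by fun_prop : Continuous fun x:ℝ => cos x ^ p * sin x ^ q).intervalIntegrable u v
  have hsplit := intervalIntegral.integral_add_adjacent_intervals (a := (0:ℝ)) (b := π)
    (c := 2*π) (hi 0 π) (hi π (2*π))
  have h2 : ∫ x in π..(2*π), cos x ^ p * sin x ^ q
      = ∫ x in (0:ℝ)..π, cos (x + π) ^ p * sin (x + π) ^ q := by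
    rw [intervalIntegral.integral_comp_add_right (fun x => cos x ^ p * sin x ^ q) π]
    norm_num [two_mul]
  have h3 : ∫ x in (0:ℝ)..π, cos (x + π) ^ p * sin (x + π) ^ q
      = - ∫ x in (0:ℝ)..π, cos x ^ p * sin x ^ q := by
    rw [← intervalIntegral.integral_neg]
    refine intervalIntegral.integral_congr fun x _ => ?_
    rw [Real.cos_add_pi, Real.sin_add_pi]
    have : (-1 : ℝ) ^ (p + q) = -1 := hpq.neg_one_pow
    calc (-cos x) ^ p * (-sin x) ^ q = (-1)^(p+q) * (cos x ^ p * sin x ^ q) := by ring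
    _ = -(cos x ^ p * sin x ^ q) := by rw [this]; ring
  rw [h2, h3] at hsplit
  linarith [hsplit]

/-- the trigonometric moment over SU(2) Haar measure in Euler angles:
`(1/(4π)²) ∫ sinθ (−sinθcosφ)^{n_X} (sinθ sinφ)^{n_Y} (cosθ)^{n_Z} dθ dφ dψ`
equals
`(1/4)(1+(−1)^{n_X})(1+(−1)^{n_Y})(1+(−1)^{n_Z}) · n_X!n_Y!n_Z!/((n_X/2)!(n_Y/2)!(n_Z/2)!) · (k+1)!/(2k+2)!`
where `n_X + n_Y + n_Z = 2k`; in particular it vanishes unless all of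
`n_X, n_Y, n_Z` are even. -/
theorem su2_trig_moment (nX nY nZ k : ℕ) (h : nX + nY + nZ = 2 * k) :
    (1 / (4 * π) ^ 2) *
        ∫ θ in (0 : ℝ)..π, ∫ φ in (0 : ℝ)..(2 * π), ∫ _ψ in (0 : ℝ)..(4 * π),
          Real.sin θ * (-(Real.sin θ) * Real.cos φ) ^ nX *
            (Real.sin θ * Real.sin φ) ^ nY * (Real.cos θ) ^ nZ =
      (1 / 4) * (1 + (-1 : ℝ) ^ nX) * (1 + (-1 : ℝ) ^ nY) * (1 + (-1 : ℝ) ^ nZ) *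
        ((nX.factorial * nY.factorial * nZ.factorial : ℝ) /
          ((nX / 2).factorial * (nY / 2).factorial * (nZ / 2).factorial)) *
        ((k + 1).factorial / (2 * k + 2).factorial) := by
  have hfact : ∀ θ : ℝ, (∫ φ in (0:ℝ)..(2*π), ∫ _ψ in (0:ℝ)..(4*π),
        Real.sin θ * (-(Real.sin θ) * Real.cos φ) ^ nX *
          (Real.sin θ * Real.sin φ) ^ nY * (Real.cos θ) ^ nZ)
      = (4*π * (-1:ℝ)^nX * ∫ φ in (0:ℝ)..(2*π), cos φ ^ nX * sin φ ^ nY)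
          * (sin θ ^ (nX+nY+1) * cos θ ^ nZ) := by
    intro θ
    rw [show (4*π * (-1:ℝ)^nX * ∫ φ in (0:ℝ)..(2*π), cos φ ^ nX * sin φ ^ nY)
          * (sin θ ^ (nX+nY+1) * cos θ ^ nZ)
        = ∫ φ in (0:ℝ)..(2*π), (4*π * (-1:ℝ)^nX * (sin θ ^ (nX+nY+1) * cos θ ^ nZ))
            * (cos φ ^ nX * sin φ ^ nY) from by
      rw [intervalIntegral.integral_const_mul]; ring]
    refine intervalIntegral.integral_congr fun φ _ => ?_
    rw [intervalIntegral.integral_const]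
    simp only [smul_eq_mul]
    ring
  simp only [hfact]
  rw [intervalIntegral.integral_const_mul]
  rcases Nat.even_or_odd nX with hx | hx
  · rcases Nat.even_or_odd nY with hy | hy
    · -- main case
      obtain ⟨a, ha⟩ := hx
      obtain ⟨b, hb⟩ := hy
      obtain ⟨c, hc⟩ : ∃ c, nZ = 2*c := ⟨nZ/2, by omega⟩
      have hxa : nX = 2*a := by omega
      have hyb : nY = 2*b := by omega
      have hk : k = a + b + c := by omega
      subst hxa hyb hc hk
      rw [J_closed a b, show 2*a+2*b+1 = 2*(a+b)+1 from by ring, Scos_closed (a+b) c]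
      rw [show ((-1:ℝ))^(2*a) = 1 from by rw [pow_mul]; norm_num,
        show ((-1:ℝ))^(2*b) = 1 from by rw [pow_mul]; norm_num,
        show ((-1:ℝ))^(2*c) = 1 from by rw [pow_mul]; norm_num]
      rw [Nat.mul_div_cancel_left a (by norm_num : 0 < 2),
        Nat.mul_div_cancel_left b (by norm_num : 0 < 2),
        Nat.mul_div_cancel_left c (by norm_num : 0 < 2)]
      rw [show 2*(a+b)+2*c+2 = 2*(a+b+c)+2 from by ring]
      have h4 : (0:ℝ) < 4^(a+b) := by positivity
      field_simp [fne, Real.pi_ne_zero]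
      ring
    · -- nX even, nY odd
      rw [phi_zero_odd nX nY (hx.add_odd hy), hy.neg_one_pow]
      ring
  · rcases Nat.even_or_odd nY with hy | hy
    · -- nX odd, nY even
      rw [phi_zero_odd nX nY (hx.add_even hy), hx.neg_one_pow]
      ring
    · -- both odd
      obtain ⟨p, hp⟩ := hx
      obtain ⟨q, hq⟩ := hy
      subst hp hq
      rw [phi_zero_both p q, Odd.neg_one_pow ⟨p, rfl⟩]
      ring
end

section
/- Suppose ρ = I/2^n is the maximally mixed state, p is a distribution on V, and K ranges over functions V × {0,1}^n → R satisfying the reconstruction constraint O = Σ_V p(V) Σ_b K(V,b) V†|b⟩⟨b|V for a fixed visible-space operator O. Then the variance Var_{V,b∼P_ρ}[K(V,b)] (with P_ρ(V,b) = p(V)⟨b|VρV†|b⟩ = p(V)/2^n) is minimized by the classical-shadow kernel K_CS(V,b) = ⟨b|V M^{-1}(O) V†|b⟩, where M is the measurement channel M(A) = Σ_V p(V) Σ_b V†|b⟩⟨b|V ⟨b|V A V†|b⟩ restricted (and inverted) on the visible space. -/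
open Matrix Finset

noncomputable section

def proj {n : ℕ} (b : Bits n) : Op n := Matrix.single b b 1

lemma trace_proj_mul {n : ℕ} (b : Bits n) (M : Op n) :
    (proj b * M).trace = M b b := by
  simp [proj, Matrix.trace, Matrix.diag, Matrix.mul_apply, Matrix.single,
    Finset.sum_ite_eq, ite_and]

lemma trace_conj_proj_mul {n : ℕ} (V : Op n) (b : Bits n) (M : Op n) :
    ((Vᴴ * proj b * V) * M).trace = (V * M * Vᴴ) b b := by
  have h1 : (Vᴴ * proj b * V) * M = Vᴴ * (proj b * (V * M)) := by
    simp [Matrix.mul_assoc]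
  rw [h1, Matrix.trace_mul_comm, show proj b * (V * M) * Vᴴ = proj b * (V * M * Vᴴ) by
    simp [Matrix.mul_assoc], trace_proj_mul]

lemma trace_conj_proj {n : ℕ} (V : Op n) (hV : V ∈ Matrix.unitaryGroup (Bits n) ℂ)
    (b : Bits n) : ((Vᴴ * proj b * V)).trace = 1 := by
  have h1 : Vᴴ * proj b * V = Vᴴ * (proj b * V) := by simp [Matrix.mul_assoc]
  rw [h1, Matrix.trace_mul_comm, Matrix.mul_assoc]
  have hVV : V * Vᴴ = 1 := by
    have := (Matrix.mem_unitaryGroup_iff).mp hV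
    simpa [Matrix.star_eq_conjTranspose] using this
  rw [hVV]
  simp [proj, Matrix.trace, Matrix.diag, Matrix.single]

/-- for the maximally mixed state `ρ = I/2^n`, among all kernels
`K` satisfying the reconstruction constraint
`O = Σ_V p(V) Σ_b K(V,b) V†|b⟩⟨b|V`, the classical-shadow kernel
`K_CS(V,b) = ⟨b|V M⁻¹(O) V†|b⟩` (here `W = M⁻¹(O)`, i.e. `M(W) = O` with `W` in
the visible space) minimizes the variance `Var_{V,b∼P_ρ}[K]`. -/
theorem classical_shadow_kernel_minimizes_variance (n : ℕ)
    (ι : Type) [Fintype ι]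
    (Vm : ι → Op n) (hV : ∀ i, Vm i ∈ Matrix.unitaryGroup (Bits n) ℂ)
    (p : ι → ℝ) (hp : ∀ i, 0 ≤ p i) (hp1 : ∑ i, p i = 1)
    (O W : Op n) (hWherm : W.IsHermitian)
    (hMW : (∑ i, (p i : ℂ) •
        ∑ b : Bits n, ((Vm i * W * (Vm i)ᴴ) b b) • ((Vm i)ᴴ * proj b * Vm i)) = O)
    (hWvis : W ∈ Submodule.span ℂ
      {Mx : Op n | ∃ i : ι, ∃ b : Bits n, Mx = (Vm i)ᴴ * proj b * Vm i}) :
    let KCS : ι → Bits n → ℝ := fun i b => ((Vm i * W * (Vm i)ᴴ) b b).re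
    let Var : (ι → Bits n → ℝ) → ℝ := fun K =>
      (∑ i, p i * ((2 : ℝ) ^ n)⁻¹ * ∑ b : Bits n, (K i b) ^ 2) -
        (∑ i, p i * ((2 : ℝ) ^ n)⁻¹ * ∑ b : Bits n, K i b) ^ 2
    let recon : (ι → Bits n → ℝ) → Prop := fun K =>
      O = ∑ i, (p i : ℂ) •
        ∑ b : Bits n, (K i b : ℂ) • ((Vm i)ᴴ * proj b * Vm i)
    recon KCS ∧ ∀ K : ι → Bits n → ℝ, recon K → Var KCS ≤ Var K := by
  intro KCS Var recon
  have herm : ∀ i, (Vm i * W * (Vm i)ᴴ).IsHermitian := fun i =>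
    Matrix.isHermitian_mul_mul_conjTranspose (Vm i) hWherm
  have hcoe : ∀ i b, ((KCS i b : ℝ) : ℂ) = (Vm i * W * (Vm i)ᴴ) b b := fun i b =>
    (herm i).coe_re_apply_self b
  have hreconCS : O = ∑ i, (p i : ℂ) •
      ∑ b : Bits n, ((KCS i b : ℝ) : ℂ) • ((Vm i)ᴴ * proj b * Vm i) := by
    rw [← hMW]
    refine Finset.sum_congr rfl fun i _ => ?_
    congr 1
    exact Finset.sum_congr rfl fun b _ => by rw [hcoe]
  -- the mean is fixed by the constraint
  have hmean : ∀ K : ι → Bits n → ℝ,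
      O = (∑ i, (p i : ℂ) • ∑ b : Bits n, (K i b : ℂ) • ((Vm i)ᴴ * proj b * Vm i)) →
      (∑ i, p i * ∑ b, K i b) = O.trace.re := by
    intro K hK
    have h := congrArg Matrix.trace hK
    simp only [Matrix.trace_sum, Matrix.trace_smul, smul_eq_mul,
      fun (i : ι) (b : Bits n) => trace_conj_proj (Vm i) (hV i) b, mul_one] at h
    have h2 : ((∑ i, p i * ∑ b, K i b : ℝ) : ℂ) = O.trace := by
      push_cast
      rw [h]
    have := congrArg Complex.re h2
    simpa using this
  -- the cross term vanishes
  have hcross : ∀ K : ι → Bits n → ℝ,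
      O = (∑ i, (p i : ℂ) • ∑ b : Bits n, (K i b : ℂ) • ((Vm i)ᴴ * proj b * Vm i)) →
      (∑ i, p i * ∑ b, (K i b - KCS i b) * KCS i b) = 0 := by
    intro K hK
    have hD : (∑ i, (p i : ℂ) •
        ∑ b : Bits n, ((K i b : ℂ) - (KCS i b : ℂ)) • ((Vm i)ᴴ * proj b * Vm i)) = 0 := by
      calc (∑ i, (p i : ℂ) •
            ∑ b : Bits n, ((K i b : ℂ) - (KCS i b : ℂ)) • ((Vm i)ᴴ * proj b * Vm i))
          = (∑ i, (p i : ℂ) • ∑ b : Bits n, (K i b : ℂ) • ((Vm i)ᴴ * proj b * Vm i))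
            - (∑ i, (p i : ℂ) •
              ∑ b : Bits n, ((KCS i b : ℝ) : ℂ) • ((Vm i)ᴴ * proj b * Vm i)) := by
            rw [← Finset.sum_sub_distrib]
            refine Finset.sum_congr rfl fun i _ => ?_
            rw [← smul_sub, ← Finset.sum_sub_distrib]
            congr 1
            exact Finset.sum_congr rfl fun b _ => by rw [sub_smul]
        _ = O - O := by rw [← hK, ← hreconCS]
        _ = 0 := sub_self O
    have hTr := congrArg (fun M : Op n => (M * W).trace) hD
    simp only [Finset.sum_mul, smul_mul_assoc, Matrix.trace_sum, Matrix.trace_smul,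
      smul_eq_mul, Matrix.zero_mul, Matrix.trace_zero, trace_conj_proj_mul] at hTr
    simp only [← hcoe] at hTr
    exact_mod_cast hTr
  refine ⟨hreconCS, fun K hK => ?_⟩
  have hK' : O = (∑ i, (p i : ℂ) •
      ∑ b : Bits n, (K i b : ℂ) • ((Vm i)ᴴ * proj b * Vm i)) := hK
  show Var KCS ≤ Var K
  simp only [Var]
  set c : ℝ := ((2 : ℝ) ^ n)⁻¹ with hcdef
  have hc : 0 ≤ c := by positivity
  have hfac : ∀ (S : ι → ℝ), ∑ i, p i * c * S i = c * ∑ i, p i * S i := by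
    intro S
    rw [Finset.mul_sum]
    exact Finset.sum_congr rfl fun i _ => by ring
  have hm : (∑ i, p i * c * ∑ b, K i b) = (∑ i, p i * c * ∑ b, KCS i b) := by
    rw [hfac, hfac, hmean K hK', hmean KCS hreconCS]
  rw [← hm]
  have hcr := hcross K hK'
  have key : (∑ i, p i * c * ∑ b, (K i b) ^ 2) - (∑ i, p i * c * ∑ b, (KCS i b) ^ 2)
      = c * ∑ i, p i * ∑ b, (K i b - KCS i b) ^ 2 := by
    have step : ∀ i, p i * c * ∑ b, (K i b) ^ 2 - p i * c * ∑ b, (KCS i b) ^ 2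
        = c * (p i * ∑ b, (K i b - KCS i b) ^ 2)
          + 2 * c * (p i * ∑ b, (K i b - KCS i b) * KCS i b) := by
      intro i
      have hinner : ∑ b, (K i b) ^ 2 - ∑ b, (KCS i b) ^ 2
          = (∑ b, (K i b - KCS i b) ^ 2) + 2 * ∑ b, (K i b - KCS i b) * KCS i b := by
        rw [← Finset.sum_sub_distrib, Finset.mul_sum, ← Finset.sum_add_distrib]
        exact Finset.sum_congr rfl fun b _ => by ring
      calc p i * c * ∑ b, (K i b) ^ 2 - p i * c * ∑ b, (KCS i b) ^ 2
          = p i * c * (∑ b, (K i b) ^ 2 - ∑ b, (KCS i b) ^ 2) := by ring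
        _ = _ := by rw [hinner]; ring
    calc (∑ i, p i * c * ∑ b, (K i b) ^ 2) - (∑ i, p i * c * ∑ b, (KCS i b) ^ 2)
        = ∑ i, (p i * c * ∑ b, (K i b) ^ 2 - p i * c * ∑ b, (KCS i b) ^ 2) :=
          (Finset.sum_sub_distrib _ _).symm
      _ = ∑ i, (c * (p i * ∑ b, (K i b - KCS i b) ^ 2)
            + 2 * c * (p i * ∑ b, (K i b - KCS i b) * KCS i b)) :=
          Finset.sum_congr rfl fun i _ => step i
      _ = c * (∑ i, p i * ∑ b, (K i b - KCS i b) ^ 2)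
            + 2 * c * (∑ i, p i * ∑ b, (K i b - KCS i b) * KCS i b) := by
          rw [Finset.sum_add_distrib, ← Finset.mul_sum, ← Finset.mul_sum]
      _ = _ := by rw [hcr]; ring
  have hnn : 0 ≤ c * ∑ i, p i * ∑ b, (K i b - KCS i b) ^ 2 := by
    refine mul_nonneg hc (Finset.sum_nonneg fun i _ => mul_nonneg (hp i)
      (Finset.sum_nonneg fun b _ => sq_nonneg _))
  linarith [key]
end
end

section
/- The lattice gauge theory plaquette operator H_Δ = −(1/(24g²))(X₁X₂X₃ − Y₁Y₂X₃ − Y₁X₂Y₃ − X₁Y₂Y₃) and link operator H_↔ = (g²/3) Z₁Z₂ + (α/(12g²))(X₁X₂ + Y₁Y₂) lie in the global SU(2) visible space; i.e., each is a linear combination of symmetrized Pauli operators B_S associated with fixed-identity permutation-invariant sets, and each satisfies: the diagonal matrix elements ⟨b|V^{⊗n} H V^{†⊗n}|b⟩ are not identically zero, and H is orthogonal to every operator A with ⟨b|V^{⊗n} A V^{†⊗n}|b⟩ = 0 for all V ∈ SU(2) and all computational basis states b. -/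
open Matrix Finset

noncomputable section

/-- the symmetrized Pauli operator `B_S` of the fixed-identity
permutation-invariant set containing `s`. -/
def Bsym {n : ℕ} (s : Fin n → Fin 4) : Op n :=
  ((Real.sqrt (2 ^ n * ((cls s).card : ℝ)) : ℂ))⁻¹ • ∑ t ∈ cls s, pStr t

/-- being in the global `SU(2)` visible space, operationally: some globally
rotated diagonal matrix element is nonzero (unless `H = 0`), and `H` is
HS-orthogonal to every invisible operator. -/
def visClaims (n : ℕ) (H : Op n) : Prop :=
  H ∈ Submodule.span ℂ {Mx : Op n | ∃ s : Fin n → Fin 4, Mx = Bsym s} ∧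
    (∃ V ∈ Matrix.specialUnitaryGroup (Fin 2) ℂ, ∃ b : Bits n,
      (tpow (n := n) V * H * (tpow (n := n) V)ᴴ) b b ≠ 0) ∧
    ∀ A : Op n,
      (∀ V ∈ Matrix.specialUnitaryGroup (Fin 2) ℂ, ∀ b : Bits n,
        (tpow (n := n) V * A * (tpow (n := n) V)ᴴ) b b = 0) →
      (Aᴴ * H).trace = 0

/-! ### Auxiliary material -/

/-- tensor product of (possibly different) one-qubit operators -/
def kprod {n : ℕ} (M : Fin n → Matrix (Fin 2) (Fin 2) ℂ) : Op n :=
  Matrix.of fun b c => ∏ i, M i (b i) (c i)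

lemma tpow_eq_kprod {n : ℕ} (V : Matrix (Fin 2) (Fin 2) ℂ) :
    tpow (n := n) V = kprod fun _ => V := rfl

lemma pStr_eq_kprod {n : ℕ} (s : Fin n → Fin 4) :
    pStr s = kprod fun i => pauli1 (s i) := rfl

lemma kprod_mul {n : ℕ} (M N : Fin n → Matrix (Fin 2) (Fin 2) ℂ) :
    kprod M * kprod N = kprod fun i => M i * N i := by
  ext b c
  rw [Matrix.mul_apply]
  simp only [kprod, Matrix.of_apply, Matrix.mul_apply]
  rw [Finset.prod_univ_sum, ← Fintype.piFinset_univ]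
  apply Finset.sum_congr rfl
  intro d _
  rw [Finset.prod_mul_distrib]

lemma kprod_conjT {n : ℕ} (M : Fin n → Matrix (Fin 2) (Fin 2) ℂ) :
    (kprod M)ᴴ = kprod fun i => (M i)ᴴ := by
  ext b c
  simp only [kprod, Matrix.conjTranspose_apply, Matrix.of_apply, star_prod]

def e2 : Fin 2 → Matrix (Fin 2) (Fin 2) ℂ := ![!![1,0;0,0], !![0,0;0,1]]

lemma e2_apply (x y z : Fin 2) : e2 x y z = if y = x ∧ z = x then 1 else 0 := by
  fin_cases x <;> fin_cases y <;> fin_cases z <;> simp [e2]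

lemma stdBasis_eq_kprod {n : ℕ} (b : Bits n) :
    Matrix.single b b (1 : ℂ) = kprod fun i => e2 (b i) := by
  ext c d
  simp only [kprod, Matrix.of_apply, e2_apply, Matrix.single]
  rw [Finset.prod_boole]
  congr 1
  simp [funext_iff, forall_and, eq_comm]

lemma trace_stdBasis_mul {n : ℕ} (b : Bits n) (M : Op n) :
    (Matrix.single b b (1 : ℂ) * M).trace = M b b := by
  rw [Matrix.trace, Finset.sum_eq_single b]
  · simp
  · intro x _ hx
    simp [Matrix.diag, hx]
  · simp

lemma stdBasis_conjT {n : ℕ} (b : Bits n) :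
    (Matrix.single b b (1 : ℂ))ᴴ = Matrix.single b b 1 := by
  ext c d
  simp only [Matrix.conjTranspose_apply, Matrix.single, Matrix.of_apply]
  by_cases h1 : b = c <;> by_cases h2 : b = d <;> simp [h1, h2]

/-- the key fact: invisibility kills conjugated-projector traces. -/
lemma trace_conj_proj_eq_zero {n : ℕ} (A : Op n) (W : Op n) (b : Bits n)
    (h : (W * A * Wᴴ) b b = 0) :
    (Aᴴ * (Wᴴ * Matrix.single b b 1 * W)).trace = 0 := by
  have e1 : Aᴴ * (Wᴴ * Matrix.single b b 1 * W) = (Wᴴ * Matrix.single b b 1 * W * A)ᴴ := by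
    simp only [Matrix.conjTranspose_mul, stdBasis_conjT, Matrix.conjTranspose_conjTranspose]
    noncomm_ring
  rw [e1, Matrix.trace_conjTranspose]
  rw [show Wᴴ * Matrix.single b b 1 * W * A
      = Wᴴ * (Matrix.single b b 1 * (W * A)) by noncomm_ring]
  rw [Matrix.trace_mul_comm, Matrix.mul_assoc, trace_stdBasis_mul]
  first
  | rw [h, star_zero]
  | rw [← Matrix.mul_assoc, h, star_zero]

/-- conjugated projectors factorize -/
lemma Mconv {n : ℕ} (V : Matrix (Fin 2) (Fin 2) ℂ) (b : Bits n) :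
    (tpow (n := n) V)ᴴ * Matrix.single b b 1 * tpow (n := n) V
      = kprod fun i => Vᴴ * e2 (b i) * V := by
  rw [tpow_eq_kprod, stdBasis_eq_kprod, kprod_conjT, kprod_mul, kprod_mul]

/-! ### the SU(2) family -/

def rr : ℂ := ((Real.sqrt 2 : ℝ) : ℂ)

lemma rr_star : star rr = rr := Complex.conj_ofReal _

lemma rr_sq : rr⁻¹ * rr⁻¹ = (2:ℂ)⁻¹ := by
  rw [← mul_inv, rr, ← Complex.ofReal_mul, Real.mul_self_sqrt (by norm_num)]
  norm_num

def Bw (w : ℂ) : Matrix (Fin 2) (Fin 2) ℂ := !![1, star w; -w, 1]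

def Vw (w : ℂ) : Matrix (Fin 2) (Fin 2) ℂ := rr⁻¹ • Bw w

lemma Vw_conjT (w : ℂ) : (Vw w)ᴴ = rr⁻¹ • (Bw w)ᴴ := by
  rw [Vw, Matrix.conjTranspose_smul, star_inv₀, rr_star]

lemma Bw_conjT (w : ℂ) : (Bw w)ᴴ = !![1, -(star w); w, 1] := by
  ext i j
  fin_cases i <;> fin_cases j <;> simp [Bw]

lemma Vw_mem (w : ℂ) (hw : star w * w = 1) :
    Vw w ∈ Matrix.specialUnitaryGroup (Fin 2) ℂ := by
  rw [Matrix.mem_specialUnitaryGroup_iff]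
  constructor
  · rw [Matrix.mem_unitaryGroup_iff]
    show Vw w * (Vw w)ᴴ = 1
    rw [Vw_conjT, Vw, Matrix.smul_mul, Matrix.mul_smul, smul_smul, rr_sq, Bw_conjT]
    have hw' : (starRingEnd ℂ) w * w = 1 := hw
    ext i j
    fin_cases i <;> fin_cases j <;>
      simp [Bw, Matrix.mul_apply, Fin.sum_univ_two, Matrix.one_apply, Complex.star_def] <;>
      linear_combination (2:ℂ)⁻¹ * hw'
  · rw [Vw, Matrix.det_smul, Bw, Matrix.det_fin_two_of]
    simp only [Fintype.card_fin]
    rw [show rr⁻¹ ^ 2 = rr⁻¹ * rr⁻¹ by ring, rr_sq]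
    linear_combination (2:ℂ)⁻¹ * hw

lemma q_diff (w : ℂ) (hw : star w * w = 1) :
    (Vw w)ᴴ * e2 0 * Vw w - (Vw w)ᴴ * e2 1 * Vw w = !![0, star w; w, 0] := by
  rw [Vw_conjT, Vw, Bw_conjT]
  have hw' : (starRingEnd ℂ) w * w = 1 := hw
  have hr : rr⁻¹ ^ 2 = (2:ℂ)⁻¹ := by rw [sq]; exact rr_sq
  ext i j
  fin_cases i <;> fin_cases j <;>
    simp [Bw, e2, Matrix.mul_apply, Fin.sum_univ_two, Matrix.smul_mul, Matrix.mul_smul,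
      smul_smul, Complex.star_def, hr]
  all_goals
    first
    | linear_combination (2 * (starRingEnd ℂ) w) * hr
    | linear_combination (2 * w) * hr
    | linear_combination (1 - (starRingEnd ℂ) w * w) * hr + (-(1:ℂ)/2) * hw'
    | linear_combination (w * (starRingEnd ℂ) w - 1) * hr + ((1:ℂ)/2) * hw'

/-! ### signed sums and trilinear expansion -/

lemma signed2 (q r : Matrix (Fin 2) (Fin 2) ℂ) :
    kprod ![q,q] - kprod ![q,r] - kprod ![r,q] + kprod ![r,r] = kprod ![q-r, q-r] := by
  ext b c
  simp only [kprod, Matrix.of_apply, Matrix.sub_apply, Matrix.add_apply, Fin.prod_univ_two,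
    Matrix.cons_val_zero, Matrix.cons_val_one, Matrix.head_cons]
  ring

lemma signed3 (q r : Matrix (Fin 2) (Fin 2) ℂ) :
    kprod ![q,q,q] - kprod ![q,q,r] - kprod ![q,r,q] + kprod ![q,r,r]
      - kprod ![r,q,q] + kprod ![r,q,r] + kprod ![r,r,q] - kprod ![r,r,r]
      = kprod ![q-r, q-r, q-r] := by
  ext b c
  simp only [kprod, Matrix.of_apply, Matrix.sub_apply, Matrix.add_apply, Fin.prod_univ_three,
    Matrix.cons_val_zero, Matrix.cons_val_one, Matrix.head_cons, Matrix.cons_val_two,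
    Matrix.tail_cons]
  ring

lemma expand3 (a₁ b₁ a₂ b₂ a₃ b₃ : ℂ) (P Q : Matrix (Fin 2) (Fin 2) ℂ) :
    kprod ![a₁•P + b₁•Q, a₂•P + b₂•Q, a₃•P + b₃•Q]
      = (a₁*a₂*a₃) • kprod ![P,P,P] + (a₁*a₂*b₃) • kprod ![P,P,Q]
      + (a₁*b₂*a₃) • kprod ![P,Q,P] + (b₁*a₂*a₃) • kprod ![Q,P,P]
      + (a₁*b₂*b₃) • kprod ![P,Q,Q] + (b₁*a₂*b₃) • kprod ![Q,P,Q]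
      + (b₁*b₂*a₃) • kprod ![Q,Q,P] + (b₁*b₂*b₃) • kprod ![Q,Q,Q] := by
  ext b c
  simp only [kprod, Matrix.of_apply, Matrix.add_apply, Matrix.smul_apply, Fin.prod_univ_three,
    Matrix.cons_val_zero, Matrix.cons_val_one, Matrix.head_cons, Matrix.cons_val_two,
    Matrix.tail_cons, smul_eq_mul]
  ring

/-! ### class computations -/

instance scDec {n : ℕ} (s t : Fin n → Fin 4) : Decidable (sameClass s t) :=
  decidable_of_iff ((∀ i, s i = 0 ↔ t i = 0) ∧
    ∀ a : Fin 4, (univ.filter fun i => s i = a).card =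
      (univ.filter fun i => t i = a).card) (by rw [sameClass])

lemma cls_eval {n : ℕ} (s : Fin n → Fin 4) : cls s = univ.filter (sameClass s) := by
  simp only [cls]
  exact Finset.filter_congr_decidable _ _ _

lemma cls33 : cls ![3,3] = {![3,3]} := by rw [cls_eval]; decide
lemma cls11 : cls ![1,1] = {![1,1]} := by rw [cls_eval]; decide
lemma cls22 : cls ![2,2] = {![2,2]} := by rw [cls_eval]; decide
lemma cls111 : cls ![1,1,1] = {![1,1,1]} := by rw [cls_eval]; decide
lemma cls221 : cls ![2,2,1] = {![2,2,1], ![2,1,2], ![1,2,2]} := by rw [cls_eval]; decide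

/-! ### span membership -/

lemma sum_pStr_cls_mem {n : ℕ} (s : Fin n → Fin 4) :
    (∑ t ∈ cls s, pStr t) ∈
      Submodule.span ℂ {Mx : Op n | ∃ s : Fin n → Fin 4, Mx = Bsym s} := by
  have hmem : s ∈ cls s := by
    rw [cls_eval, Finset.mem_filter]
    exact ⟨Finset.mem_univ s, fun i => Iff.rfl, fun a => rfl⟩
  have hpos : (0:ℝ) < (cls s).card := by
    exact_mod_cast Finset.card_pos.mpr ⟨s, hmem⟩
  have hx : ((Real.sqrt (2 ^ n * ((cls s).card : ℝ)) : ℝ) : ℂ) ≠ 0 := by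
    refine Complex.ofReal_ne_zero.mpr (ne_of_gt (Real.sqrt_pos.mpr ?_))
    positivity
  have hkey : (∑ t ∈ cls s, pStr t)
      = ((Real.sqrt (2 ^ n * ((cls s).card : ℝ)) : ℝ) : ℂ) • Bsym s := by
    rw [Bsym, smul_inv_smul₀ hx]
  rw [hkey]
  exact Submodule.smul_mem _ _ (Submodule.subset_span ⟨s, rfl⟩)


/-! ### more helpers -/

lemma tpow_one {n : ℕ} : tpow (n := n) (1 : Matrix (Fin 2) (Fin 2) ℂ) = 1 := by
  ext b c
  by_cases h : b = c
  · subst h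
    simp [tpow, Matrix.one_apply]
  · obtain ⟨i, hi⟩ := Function.ne_iff.mp h
    rw [Matrix.one_apply_ne h]
    exact Finset.prod_eq_zero (Finset.mem_univ i) (Matrix.one_apply_ne hi)

lemma pStr2_kprod (s : Fin 2 → Fin 4) : pStr s = kprod ![pauli1 (s 0), pauli1 (s 1)] := by
  rw [pStr_eq_kprod]
  congr 1
  try (funext i; fin_cases i <;> rfl)

lemma pStr3_kprod (s : Fin 3 → Fin 4) :
    pStr s = kprod ![pauli1 (s 0), pauli1 (s 1), pauli1 (s 2)] := by
  rw [pStr_eq_kprod]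
  congr 1
  try (funext i; fin_cases i <;> rfl)

lemma kprod2_norm (V : Matrix (Fin 2) (Fin 2) ℂ) (b : Bits 2) :
    kprod (fun i => Vᴴ * e2 (b i) * V) = kprod ![Vᴴ * e2 (b 0) * V, Vᴴ * e2 (b 1) * V] := by
  congr 1
  try (funext i; fin_cases i <;> rfl)

lemma kprod3_norm (V : Matrix (Fin 2) (Fin 2) ℂ) (b : Bits 3) :
    kprod (fun i => Vᴴ * e2 (b i) * V)
      = kprod ![Vᴴ * e2 (b 0) * V, Vᴴ * e2 (b 1) * V, Vᴴ * e2 (b 2) * V] := by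
  congr 1
  try (funext i; fin_cases i <;> rfl)

lemma signedM2 (V : Matrix (Fin 2) (Fin 2) ℂ) :
    (tpow (n := 2) V)ᴴ * Matrix.single ![0,0] ![0,0] 1 * tpow (n := 2) V
      - (tpow (n := 2) V)ᴴ * Matrix.single ![0,1] ![0,1] 1 * tpow (n := 2) V
      - (tpow (n := 2) V)ᴴ * Matrix.single ![1,0] ![1,0] 1 * tpow (n := 2) V
      + (tpow (n := 2) V)ᴴ * Matrix.single ![1,1] ![1,1] 1 * tpow (n := 2) V
      = kprod ![Vᴴ * e2 0 * V - Vᴴ * e2 1 * V, Vᴴ * e2 0 * V - Vᴴ * e2 1 * V] := by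
  rw [Mconv, Mconv, Mconv, Mconv, kprod2_norm V, kprod2_norm V, kprod2_norm V, kprod2_norm V]
  simp only [Matrix.cons_val_zero, Matrix.cons_val_one, Matrix.head_cons]
  exact signed2 _ _

lemma signedM3 (V : Matrix (Fin 2) (Fin 2) ℂ) :
    (tpow (n := 3) V)ᴴ * Matrix.single ![0,0,0] ![0,0,0] 1 * tpow (n := 3) V
      - (tpow (n := 3) V)ᴴ * Matrix.single ![0,0,1] ![0,0,1] 1 * tpow (n := 3) V
      - (tpow (n := 3) V)ᴴ * Matrix.single ![0,1,0] ![0,1,0] 1 * tpow (n := 3) V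
      + (tpow (n := 3) V)ᴴ * Matrix.single ![0,1,1] ![0,1,1] 1 * tpow (n := 3) V
      - (tpow (n := 3) V)ᴴ * Matrix.single ![1,0,0] ![1,0,0] 1 * tpow (n := 3) V
      + (tpow (n := 3) V)ᴴ * Matrix.single ![1,0,1] ![1,0,1] 1 * tpow (n := 3) V
      + (tpow (n := 3) V)ᴴ * Matrix.single ![1,1,0] ![1,1,0] 1 * tpow (n := 3) V
      - (tpow (n := 3) V)ᴴ * Matrix.single ![1,1,1] ![1,1,1] 1 * tpow (n := 3) V
      = kprod ![Vᴴ * e2 0 * V - Vᴴ * e2 1 * V, Vᴴ * e2 0 * V - Vᴴ * e2 1 * V,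
          Vᴴ * e2 0 * V - Vᴴ * e2 1 * V] := by
  rw [Mconv, Mconv, Mconv, Mconv, Mconv, Mconv, Mconv, Mconv,
    kprod3_norm V, kprod3_norm V, kprod3_norm V, kprod3_norm V,
    kprod3_norm V, kprod3_norm V, kprod3_norm V, kprod3_norm V]
  simp only [Matrix.cons_val_zero, Matrix.cons_val_one, Matrix.head_cons, Matrix.cons_val_two,
    Matrix.tail_cons]
  exact signed3 _ _

lemma one_diff : (1 : Matrix (Fin 2) (Fin 2) ℂ)ᴴ * e2 0 * 1 - 1ᴴ * e2 1 * 1 = !![1,0;0,-1] := by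
  ext i j
  fin_cases i <;> fin_cases j <;> simp [e2]

-- facts about the specific w's
lemma hw_one : star (1 : ℂ) * 1 = 1 := by simp

lemma hw_I : star Complex.I * Complex.I = 1 := by
  rw [Complex.star_def, Complex.conj_I]
  simp [Complex.I_mul_I]

lemma star_w1 : star ((3 + 4 * Complex.I) / 5 : ℂ) = (3 - 4 * Complex.I) / 5 := by
  rw [Complex.star_def]
  simp [map_div₀, Complex.conj_I, map_ofNat]
  ring

lemma star_w2 : star ((4 + 3 * Complex.I) / 5 : ℂ) = (4 - 3 * Complex.I) / 5 := by
  rw [Complex.star_def]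
  simp [map_div₀, Complex.conj_I, map_ofNat]
  ring

lemma hw_w1 : star ((3 + 4 * Complex.I) / 5 : ℂ) * ((3 + 4 * Complex.I) / 5) = 1 := by
  rw [star_w1]
  linear_combination (-(16:ℂ)/25) * Complex.I_mul_I

lemma hw_w2 : star ((4 + 3 * Complex.I) / 5 : ℂ) * ((4 + 3 * Complex.I) / 5) = 1 := by
  rw [star_w2]
  linear_combination (-(9:ℂ)/25) * Complex.I_mul_I

-- splitting the N matrices into X and Y parts
lemma Nsplit1 : (!![0, star ((3 + 4 * Complex.I) / 5 : ℂ); (3 + 4 * Complex.I) / 5, 0]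
      : Matrix (Fin 2) (Fin 2) ℂ)
    = ((3:ℂ)/5) • !![0,1;1,0] + ((4:ℂ)/5) • !![0,-Complex.I;Complex.I,0] := by
  rw [star_w1]
  ext i j
  fin_cases i <;> fin_cases j <;> simp <;> ring

lemma Nsplit2 : (!![0, star ((4 + 3 * Complex.I) / 5 : ℂ); (4 + 3 * Complex.I) / 5, 0]
      : Matrix (Fin 2) (Fin 2) ℂ)
    = ((4:ℂ)/5) • !![0,1;1,0] + ((3:ℂ)/5) • !![0,-Complex.I;Complex.I,0] := by
  rw [star_w2]
  ext i j
  fin_cases i <;> fin_cases j <;> simp <;> ring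

lemma NI_eq : (!![0, star (Complex.I : ℂ); Complex.I, 0] : Matrix (Fin 2) (Fin 2) ℂ)
    = !![0,-Complex.I;Complex.I,0] := by
  rw [Complex.star_def, Complex.conj_I]

lemma N1_eq : (!![0, star (1 : ℂ); (1:ℂ), 0] : Matrix (Fin 2) (Fin 2) ℂ) = !![0,1;1,0] := by
  norm_num

-- conjugations by Vw 1 for the nonvanishing matrix element (n = 3)
lemma conjX : Vw 1 * pauli1 1 * (Vw 1)ᴴ = !![1,0;0,-1] := by
  rw [Vw_conjT, Vw, Bw_conjT, Matrix.smul_mul, Matrix.mul_smul, Matrix.smul_mul, smul_smul,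
    rr_sq]
  ext i j
  fin_cases i <;> fin_cases j <;>
    simp [Bw, pauli1, Matrix.mul_apply, Fin.sum_univ_two]
  all_goals ring_nf

lemma conjY : Vw 1 * pauli1 2 * (Vw 1)ᴴ = !![0,-Complex.I;Complex.I,0] := by
  rw [Vw_conjT, Vw, Bw_conjT, Matrix.smul_mul, Matrix.mul_smul, Matrix.smul_mul, smul_smul,
    rr_sq]
  ext i j
  fin_cases i <;> fin_cases j <;>
    simp [Bw, pauli1, Matrix.mul_apply, Fin.sum_univ_two]
  all_goals ring_nf

lemma conj_pStr3 (V : Matrix (Fin 2) (Fin 2) ℂ) (s : Fin 3 → Fin 4) :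
    tpow (n := 3) V * pStr s * (tpow (n := 3) V)ᴴ
      = kprod ![V * pauli1 (s 0) * Vᴴ, V * pauli1 (s 1) * Vᴴ, V * pauli1 (s 2) * Vᴴ] := by
  rw [tpow_eq_kprod, pStr_eq_kprod, kprod_conjT, kprod_mul, kprod_mul]
  congr 1
  try (funext i; fin_cases i <;> rfl)

/-! ### the main theorem -/

/-- the lattice gauge theory plaquette operator `H_Δ` (on 3 qubits)
and link operator `H_↔` (on 2 qubits) lie in the global `SU(2)` visible space. -/
theorem lgt_terms_in_visible_space (g α : ℝ) (hg : g ≠ 0) (hα : α ≠ 0) :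
    visClaims 3
        ((-(1 / (24 * (g : ℂ) ^ 2))) •
          (pStr (n := 3) ![1, 1, 1] - pStr (n := 3) ![2, 2, 1] -
            pStr (n := 3) ![2, 1, 2] - pStr (n := 3) ![1, 2, 2])) ∧
      visClaims 2
        (((g : ℂ) ^ 2 / 3) • pStr (n := 2) ![3, 3] +
          ((α : ℂ) / (12 * (g : ℂ) ^ 2)) •
            (pStr (n := 2) ![1, 1] + pStr (n := 2) ![2, 2])) := by
  have hg' : (g:ℂ) ≠ 0 := Complex.ofReal_ne_zero.mpr hg
  constructor
  · -- the plaquette operator on 3 qubits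
    refine ⟨?_, ?_, ?_⟩
    · -- span membership
      have h111 : pStr (n := 3) ![1,1,1]
          ∈ Submodule.span ℂ {Mx : Op 3 | ∃ s : Fin 3 → Fin 4, Mx = Bsym s} := by
        have h := sum_pStr_cls_mem (![1,1,1] : Fin 3 → Fin 4)
        rwa [cls111, Finset.sum_singleton] at h
      have hsum : (pStr (n := 3) ![2,2,1] + pStr (n := 3) ![2,1,2] + pStr (n := 3) ![1,2,2])
          ∈ Submodule.span ℂ {Mx : Op 3 | ∃ s : Fin 3 → Fin 4, Mx = Bsym s} := by
        have h := sum_pStr_cls_mem (![2,2,1] : Fin 3 → Fin 4)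
        rw [cls221, show ({![2,2,1], ![2,1,2], ![1,2,2]} : Finset (Fin 3 → Fin 4))
            = insert ![2,2,1] (insert ![2,1,2] {![1,2,2]}) from rfl,
          Finset.sum_insert (by decide), Finset.sum_insert (by decide),
          Finset.sum_singleton, ← add_assoc] at h
        exact h
      have hre : pStr (n := 3) ![1,1,1] - pStr (n := 3) ![2,2,1] - pStr (n := 3) ![2,1,2]
          - pStr (n := 3) ![1,2,2]
          = pStr (n := 3) ![1,1,1]
            - (pStr (n := 3) ![2,2,1] + pStr (n := 3) ![2,1,2] + pStr (n := 3) ![1,2,2]) := by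
        abel
      rw [hre]
      exact Submodule.smul_mem _ _ (Submodule.sub_mem _ h111 hsum)
    · -- a nonvanishing rotated diagonal matrix element
      refine ⟨Vw 1, Vw_mem 1 hw_one, (fun _ => 0), ?_⟩
      rw [Matrix.mul_smul, Matrix.smul_mul, Matrix.smul_apply]
      rw [Matrix.mul_sub, Matrix.mul_sub, Matrix.mul_sub, Matrix.sub_mul, Matrix.sub_mul,
        Matrix.sub_mul]
      rw [conj_pStr3, conj_pStr3, conj_pStr3, conj_pStr3]
      simp only [Matrix.cons_val_zero, Matrix.cons_val_one, Matrix.head_cons,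
        Matrix.cons_val_two, Matrix.tail_cons]
      rw [conjX, conjY]
      simp only [Matrix.sub_apply, kprod, Matrix.of_apply, Fin.prod_univ_three,
        Matrix.cons_val_zero, Matrix.cons_val_one, Matrix.head_cons, Matrix.cons_val_two,
        Matrix.tail_cons]
      norm_num [hg']
    · -- orthogonality to invisible operators
      intro A hA
      have key : ∀ (V : Matrix (Fin 2) (Fin 2) ℂ), V ∈ Matrix.specialUnitaryGroup (Fin 2) ℂ →
          ∀ b : Bits 3,
          (Aᴴ * ((tpow (n := 3) V)ᴴ * Matrix.single b b 1 * tpow (n := 3) V)).trace = 0 :=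
        fun V hV b => trace_conj_proj_eq_zero A (tpow V) b (hA V hV b)
      have k2 := key (Vw Complex.I) (Vw_mem _ hw_I)
      have k3 := key (Vw ((3 + 4*Complex.I)/5)) (Vw_mem _ hw_w1)
      have k4 := key (Vw ((4 + 3*Complex.I)/5)) (Vw_mem _ hw_w2)
      have S1 := signedM3 (Vw ((3 + 4*Complex.I)/5))
      rw [q_diff _ hw_w1, Nsplit1, expand3] at S1
      have S2 := signedM3 (Vw ((4 + 3*Complex.I)/5))
      rw [q_diff _ hw_w2, Nsplit2, expand3] at S2
      have S3 := signedM3 (Vw Complex.I)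
      rw [q_diff _ hw_I, NI_eq] at S3
      have decomp : pStr (n := 3) ![1,1,1] - pStr (n := 3) ![2,2,1] - pStr (n := 3) ![2,1,2]
            - pStr (n := 3) ![1,2,2]
          = (-(125:ℂ)/21) • ((tpow (n := 3) (Vw ((3 + 4*Complex.I)/5)))ᴴ
                * Matrix.single ![0,0,0] ![0,0,0] 1 * tpow (n := 3) (Vw ((3 + 4*Complex.I)/5))
              - (tpow (n := 3) (Vw ((3 + 4*Complex.I)/5)))ᴴ
                * Matrix.single ![0,0,1] ![0,0,1] 1 * tpow (n := 3) (Vw ((3 + 4*Complex.I)/5))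
              - (tpow (n := 3) (Vw ((3 + 4*Complex.I)/5)))ᴴ
                * Matrix.single ![0,1,0] ![0,1,0] 1 * tpow (n := 3) (Vw ((3 + 4*Complex.I)/5))
              + (tpow (n := 3) (Vw ((3 + 4*Complex.I)/5)))ᴴ
                * Matrix.single ![0,1,1] ![0,1,1] 1 * tpow (n := 3) (Vw ((3 + 4*Complex.I)/5))
              - (tpow (n := 3) (Vw ((3 + 4*Complex.I)/5)))ᴴ
                * Matrix.single ![1,0,0] ![1,0,0] 1 * tpow (n := 3) (Vw ((3 + 4*Complex.I)/5))
              + (tpow (n := 3) (Vw ((3 + 4*Complex.I)/5)))ᴴ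
                * Matrix.single ![1,0,1] ![1,0,1] 1 * tpow (n := 3) (Vw ((3 + 4*Complex.I)/5))
              + (tpow (n := 3) (Vw ((3 + 4*Complex.I)/5)))ᴴ
                * Matrix.single ![1,1,0] ![1,1,0] 1 * tpow (n := 3) (Vw ((3 + 4*Complex.I)/5))
              - (tpow (n := 3) (Vw ((3 + 4*Complex.I)/5)))ᴴ
                * Matrix.single ![1,1,1] ![1,1,1] 1 * tpow (n := 3) (Vw ((3 + 4*Complex.I)/5)))
          + ((125:ℂ)/28) • ((tpow (n := 3) (Vw ((4 + 3*Complex.I)/5)))ᴴ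
                * Matrix.single ![0,0,0] ![0,0,0] 1 * tpow (n := 3) (Vw ((4 + 3*Complex.I)/5))
              - (tpow (n := 3) (Vw ((4 + 3*Complex.I)/5)))ᴴ
                * Matrix.single ![0,0,1] ![0,0,1] 1 * tpow (n := 3) (Vw ((4 + 3*Complex.I)/5))
              - (tpow (n := 3) (Vw ((4 + 3*Complex.I)/5)))ᴴ
                * Matrix.single ![0,1,0] ![0,1,0] 1 * tpow (n := 3) (Vw ((4 + 3*Complex.I)/5))
              + (tpow (n := 3) (Vw ((4 + 3*Complex.I)/5)))ᴴ
                * Matrix.single ![0,1,1] ![0,1,1] 1 * tpow (n := 3) (Vw ((4 + 3*Complex.I)/5))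
              - (tpow (n := 3) (Vw ((4 + 3*Complex.I)/5)))ᴴ
                * Matrix.single ![1,0,0] ![1,0,0] 1 * tpow (n := 3) (Vw ((4 + 3*Complex.I)/5))
              + (tpow (n := 3) (Vw ((4 + 3*Complex.I)/5)))ᴴ
                * Matrix.single ![1,0,1] ![1,0,1] 1 * tpow (n := 3) (Vw ((4 + 3*Complex.I)/5))
              + (tpow (n := 3) (Vw ((4 + 3*Complex.I)/5)))ᴴ
                * Matrix.single ![1,1,0] ![1,1,0] 1 * tpow (n := 3) (Vw ((4 + 3*Complex.I)/5))
              - (tpow (n := 3) (Vw ((4 + 3*Complex.I)/5)))ᴴ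
                * Matrix.single ![1,1,1] ![1,1,1] 1 * tpow (n := 3) (Vw ((4 + 3*Complex.I)/5)))
          + ((25:ℂ)/12) • ((tpow (n := 3) (Vw Complex.I))ᴴ
                * Matrix.single ![0,0,0] ![0,0,0] 1 * tpow (n := 3) (Vw Complex.I)
              - (tpow (n := 3) (Vw Complex.I))ᴴ
                * Matrix.single ![0,0,1] ![0,0,1] 1 * tpow (n := 3) (Vw Complex.I)
              - (tpow (n := 3) (Vw Complex.I))ᴴ
                * Matrix.single ![0,1,0] ![0,1,0] 1 * tpow (n := 3) (Vw Complex.I)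
              + (tpow (n := 3) (Vw Complex.I))ᴴ
                * Matrix.single ![0,1,1] ![0,1,1] 1 * tpow (n := 3) (Vw Complex.I)
              - (tpow (n := 3) (Vw Complex.I))ᴴ
                * Matrix.single ![1,0,0] ![1,0,0] 1 * tpow (n := 3) (Vw Complex.I)
              + (tpow (n := 3) (Vw Complex.I))ᴴ
                * Matrix.single ![1,0,1] ![1,0,1] 1 * tpow (n := 3) (Vw Complex.I)
              + (tpow (n := 3) (Vw Complex.I))ᴴ
                * Matrix.single ![1,1,0] ![1,1,0] 1 * tpow (n := 3) (Vw Complex.I)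
              - (tpow (n := 3) (Vw Complex.I))ᴴ
                * Matrix.single ![1,1,1] ![1,1,1] 1 * tpow (n := 3) (Vw Complex.I)) := by
        rw [S1, S2, S3]
        rw [pStr3_kprod, pStr3_kprod, pStr3_kprod, pStr3_kprod]
        simp only [Matrix.cons_val_zero, Matrix.cons_val_one, Matrix.head_cons,
          Matrix.cons_val_two, Matrix.tail_cons,
          show pauli1 1 = !![0,1;1,0] from rfl, show pauli1 2 = !![0,-Complex.I;Complex.I,0]
            from rfl]
        match_scalars <;> norm_num
      rw [Matrix.mul_smul, Matrix.trace_smul, decomp]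
      simp only [Matrix.mul_add, Matrix.mul_sub, Matrix.mul_smul, Matrix.trace_add,
        Matrix.trace_sub, Matrix.trace_smul, k2, k3, k4]
      simp
  · -- the link operator on 2 qubits
    refine ⟨?_, ?_, ?_⟩
    · -- span membership
      have h33 : pStr (n := 2) ![3,3]
          ∈ Submodule.span ℂ {Mx : Op 2 | ∃ s : Fin 2 → Fin 4, Mx = Bsym s} := by
        have h := sum_pStr_cls_mem (![3,3] : Fin 2 → Fin 4)
        rwa [cls33, Finset.sum_singleton] at h
      have h11 : pStr (n := 2) ![1,1]
          ∈ Submodule.span ℂ {Mx : Op 2 | ∃ s : Fin 2 → Fin 4, Mx = Bsym s} := by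
        have h := sum_pStr_cls_mem (![1,1] : Fin 2 → Fin 4)
        rwa [cls11, Finset.sum_singleton] at h
      have h22 : pStr (n := 2) ![2,2]
          ∈ Submodule.span ℂ {Mx : Op 2 | ∃ s : Fin 2 → Fin 4, Mx = Bsym s} := by
        have h := sum_pStr_cls_mem (![2,2] : Fin 2 → Fin 4)
        rwa [cls22, Finset.sum_singleton] at h
      exact Submodule.add_mem _ (Submodule.smul_mem _ _ h33)
        (Submodule.smul_mem _ _ (Submodule.add_mem _ h11 h22))
    · -- a nonvanishing rotated diagonal matrix element
      refine ⟨1, one_mem _, (fun _ => 0), ?_⟩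
      rw [tpow_one, Matrix.conjTranspose_one, Matrix.one_mul, Matrix.mul_one]
      simp only [Matrix.add_apply, Matrix.smul_apply, pStr, Matrix.of_apply,
        Fin.prod_univ_two, Matrix.cons_val_zero, Matrix.cons_val_one, Matrix.head_cons,
        smul_eq_mul]
      norm_num [show pauli1 3 = !![1,0;0,-1] from rfl,
        show pauli1 2 = !![0,-Complex.I;Complex.I,0] from rfl,
        show pauli1 1 = !![0,1;1,0] from rfl, hg']
    · -- orthogonality to invisible operators
      intro A hA
      have key : ∀ (V : Matrix (Fin 2) (Fin 2) ℂ), V ∈ Matrix.specialUnitaryGroup (Fin 2) ℂ →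
          ∀ b : Bits 2,
          (Aᴴ * ((tpow (n := 2) V)ᴴ * Matrix.single b b 1 * tpow (n := 2) V)).trace = 0 :=
        fun V hV b => trace_conj_proj_eq_zero A (tpow V) b (hA V hV b)
      have k0 := key 1 (one_mem _)
      have kx := key (Vw 1) (Vw_mem _ hw_one)
      have ky := key (Vw Complex.I) (Vw_mem _ hw_I)
      have S0 := signedM2 (1 : Matrix (Fin 2) (Fin 2) ℂ)
      rw [one_diff] at S0
      have SX := signedM2 (Vw 1)
      rw [q_diff _ hw_one, N1_eq] at SX
      have SY := signedM2 (Vw Complex.I)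
      rw [q_diff _ hw_I, NI_eq] at SY
      have p33 : pStr (n := 2) ![3,3] = kprod ![!![1,0;0,-1], !![1,0;0,-1]] := by
        rw [pStr2_kprod]
        simp only [Matrix.cons_val_zero, Matrix.cons_val_one, Matrix.head_cons,
          show pauli1 3 = !![1,0;0,-1] from rfl]
      have p11 : pStr (n := 2) ![1,1] = kprod ![!![0,1;1,0], !![0,1;1,0]] := by
        rw [pStr2_kprod]
        simp only [Matrix.cons_val_zero, Matrix.cons_val_one, Matrix.head_cons,
          show pauli1 1 = !![0,1;1,0] from rfl]
      have p22 : pStr (n := 2) ![2,2]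
          = kprod ![!![0,-Complex.I;Complex.I,0], !![0,-Complex.I;Complex.I,0]] := by
        rw [pStr2_kprod]
        simp only [Matrix.cons_val_zero, Matrix.cons_val_one, Matrix.head_cons,
          show pauli1 2 = !![0,-Complex.I;Complex.I,0] from rfl]
      have I33 := p33.trans S0.symm
      have I11 := p11.trans SX.symm
      have I22 := p22.trans SY.symm
      rw [I33, I11, I22]
      simp only [Matrix.mul_add, Matrix.mul_sub, Matrix.mul_smul, Matrix.trace_add,
        Matrix.trace_sub, Matrix.trace_smul, k0, kx, ky]
      simp
end
end
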